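/- Let β be a backbend sequence with values in ℤ₊ such that β_l − β_m ≤ l − m for all l ≥ m. Let π be an oriented path (each step strictly increases the d-th coordinate by 1) from the origin to a vertex y*, and let π̂ be a β-backbend path starting at y* whose vertices avoid those of π except possibly y* and one switching vertex z*. Then the concatenation of the portion of π up to z* (or all of π if the paths share only y*) with the portion of π̂ from z* onwards is itself a β-backbend path from the origin. More precisely: if x* is any vertex lying on π̂, h* is the record level of the concatenated path up to x*, and ĥ is the record level of π̂ up to x*, then ĥ ≥ h* and x*_d ≥ ĥ − β_{ĥ} imply x*_d ≥ h* − β_{h*}. -/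
import Mathlib


/-- Vertices of the `d+2`-dimensional BCC lattice ambient space (`d+2 ≥ 2`). -/
abbrev Vertex (d : ℕ) := Fin (d + 2) → ℤ

/-- The BCC lattice vertex set: integer vectors with all coordinates of equal parity. -/
def bccVertices (d : ℕ) : Set (Vertex d) := {x | ∀ i j, x i % 2 = x j % 2}

/-- BCC adjacency: all coordinates differ by exactly 1 in absolute value. -/
def bccAdj {d : ℕ} (x y : Vertex d) : Prop := ∀ i, |x i - y i| = 1

/-- The last (`d`-th) coordinate of a vertex. -/
def lastC {d : ℕ} (x : Vertex d) : ℤ := x (Fin.last (d + 1))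

/-- A path in `W`: a finite sequence of distinct vertices of `W`,
consecutive ones adjacent in the BCC lattice. -/
def IsPathIn {d n : ℕ} (W : Set (Vertex d)) (x : Fin (n + 1) → Vertex d) : Prop :=
  Function.Injective x ∧ (∀ i, x i ∈ W) ∧
    ∀ i : Fin n, bccAdj (x i.castSucc) (x i.succ)

/-- Record level of the path `x` up to step `i`: the maximum last coordinate
among `x 0, …, x i`. -/
def recLevel {d n : ℕ} (x : Fin (n + 1) → Vertex d) (i : Fin (n + 1)) : ℤ :=
  (Finset.Iic i).sup' Finset.nonempty_Iic fun j => lastC (x j)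

/-- `x` is a `β`-backbend path for a backbend sequence `β : ℤ₊ → ℤ₊ ∪ {∞}`:
at each step `i`, `x^i_d ≥ h^i − β (h^i)`, the condition being vacuous when
`β (h^i) = ∞`. -/
def IsBackbendPath {d n : ℕ} (β : ℕ → ℕ∞) (x : Fin (n + 1) → Vertex d) : Prop :=
  ∀ (i : Fin (n + 1)) (b : ℕ), β (recLevel x i).toNat = (b : ℕ∞) →
    recLevel x i - (b : ℤ) ≤ lastC (x i)

/-- A configuration: each (unordered) edge is open (`true`) or closed (`false`). -/
abbrev Config (d : ℕ) := Sym2 (Vertex d) → Bool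

/-- The set of vertices joined to the origin by an open `β`-backbend path in `W`. -/
def cluster {d : ℕ} (β : ℕ → ℕ∞) (W : Set (Vertex d)) (ω : Config d) :
    Set (Vertex d) :=
  {y | ∃ (n : ℕ) (x : Fin (n + 1) → Vertex d), IsPathIn W x ∧ IsBackbendPath β x ∧
      (∀ i : Fin n, ω s(x i.castSucc, x i.succ) = true) ∧
      x 0 = 0 ∧ x (Fin.last n) = y}

/-- Concatenation preserves the backbend property: let `β : ℤ₊ → ℤ₊` satisfy
`β l − β m ≤ l − m` for `l ≥ m`; let `π` be an oriented path from the origin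
to `y* = π (last)`, and `π̂` a `β`-backbend path starting at `y*` whose
vertices avoid those of `π` before the switching vertex `z* = π a = π̂ b`.
Then the path obtained by following `π` up to `z*` and then `π̂` from `z*`
onwards is itself a `β`-backbend path in the BCC lattice from the origin. -/
theorem stmt_7 {d n m : ℕ} (β : ℕ → ℕ)
    (hβ : ∀ l k : ℕ, k ≤ l → (β l : ℤ) - (β k : ℤ) ≤ (l : ℤ) - (k : ℤ))
    (π : Fin (n + 1) → Vertex d) (πh : Fin (m + 1) → Vertex d)
    (hπ : IsPathIn (bccVertices d) π) (hπ0 : π 0 = 0)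
    (hor : ∀ i : Fin n, lastC (π i.succ) = lastC (π i.castSucc) + 1)
    (hπh : IsPathIn (bccVertices d) πh)
    (hπhb : IsBackbendPath (fun h => (β h : ℕ∞)) πh)
    (hy : πh 0 = π (Fin.last n))
    (a : Fin (n + 1)) (b : Fin (m + 1)) (hab : π a = πh b)
    (hmin : ∀ i : Fin (n + 1), i < a → ∀ j : Fin (m + 1), π i ≠ πh j) :
    ∃ σ : Fin (a.val + (m - b.val) + 1) → Vertex d,
      (∀ j : Fin (a.val + (m - b.val) + 1), (hj : j.val ≤ a.val) →
        σ j = π ⟨j.val, by have := a.isLt; omega⟩) ∧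
      (∀ j : Fin (a.val + (m - b.val) + 1), (hj : a.val < j.val) →
        σ j = πh ⟨b.val + (j.val - a.val),
          by have := j.isLt; have := b.isLt; omega⟩) ∧
      σ 0 = 0 ∧ IsPathIn (bccVertices d) σ ∧
      IsBackbendPath (fun h => (β h : ℕ∞)) σ := by

  have hbm : b.val ≤ m := Nat.lt_succ_iff.mp b.isLt
  have han : a.val ≤ n := Nat.lt_succ_iff.mp a.isLt
  -- last coordinate of π is the index
  have hlast : ∀ k : ℕ, (hk : k < n + 1) → lastC (π ⟨k, hk⟩) = (k : ℤ) := by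
    intro k
    induction k with
    | zero =>
      intro hk
      have h0 : (⟨0, hk⟩ : Fin (n + 1)) = 0 := rfl
      rw [h0, hπ0]
      simp [lastC]
    | succ k ih =>
      intro hk
      have hk' : k < n := by omega
      have h1 := hor ⟨k, hk'⟩
      have e1 : (⟨k, hk'⟩ : Fin n).succ = ⟨k + 1, hk⟩ := rfl
      have e2 : (⟨k, hk'⟩ : Fin n).castSucc = ⟨k, by omega⟩ := rfl
      rw [e1, e2] at h1
      rw [h1, ih (by omega)]
      push_cast
      ring
  have hlast0 : lastC (πh 0) = (n : ℤ) := by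
    rw [hy]
    have : (Fin.last n) = (⟨n, by omega⟩ : Fin (n + 1)) := rfl
    rw [this, hlast n (by omega)]
  set σ : Fin (a.val + (m - b.val) + 1) → Vertex d := fun j =>
    if hj : j.val ≤ a.val then π ⟨j.val, by omega⟩
    else πh ⟨b.val + (j.val - a.val), by have := j.isLt; omega⟩ with hσdef
  have hσle : ∀ j : Fin (a.val + (m - b.val) + 1), (hj : j.val ≤ a.val) →
      σ j = π ⟨j.val, by omega⟩ := by
    intro j hj
    simp only [hσdef, dif_pos hj]
  have hσgt : ∀ j : Fin (a.val + (m - b.val) + 1), (hj : a.val < j.val) →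
      σ j = πh ⟨b.val + (j.val - a.val), by have := j.isLt; omega⟩ := by
    intro j hj
    simp only [hσdef, dif_neg (by omega : ¬ j.val ≤ a.val)]
  have hσge : ∀ j : Fin (a.val + (m - b.val) + 1), (hj : a.val ≤ j.val) →
      σ j = πh ⟨b.val + (j.val - a.val), by have := j.isLt; omega⟩ := by
    intro j hj
    rcases Nat.lt_or_ge a.val j.val with h | h
    · exact hσgt j h
    · have hja : j.val = a.val := by omega
      rw [hσle j (by omega)]
      have e1 : (⟨j.val, by omega⟩ : Fin (n + 1)) = a := Fin.ext hja
      have e2 : (⟨b.val + (j.val - a.val), by have := j.isLt; omega⟩ : Fin (m + 1)) = b :=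
        Fin.ext (by simp [hja])
      rw [e1, e2, hab]
  -- last coordinate of σ on the first piece
  have hσlast : ∀ j : Fin (a.val + (m - b.val) + 1), (hj : j.val ≤ a.val) →
      lastC (σ j) = (j.val : ℤ) := by
    intro j hj
    rw [hσle j hj, hlast j.val (by omega)]
  have hσ0 : σ 0 = 0 := by
    rw [hσle 0 (by simp)]
    have e : (⟨(0 : Fin (a.val + (m - b.val) + 1)).val, by simp⟩ : Fin (n + 1)) = 0 :=
      Fin.ext (by simp)
    rw [e, hπ0]
  refine ⟨σ, hσle, hσgt, hσ0, ⟨?_, ?_, ?_⟩, ?_⟩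
  · -- injectivity
    intro j j' h
    rcases le_or_gt j.val a.val with hj | hj <;>
      rcases le_or_gt j'.val a.val with hj' | hj'
    · rw [hσle j hj, hσle j' hj'] at h
      have := hπ.1 h
      exact Fin.ext (by simpa using congrArg Fin.val this)
    · rw [hσle j hj, hσgt j' hj'] at h
      rcases Nat.lt_or_ge j.val a.val with hlt | hge
      · exact absurd h (hmin ⟨j.val, by omega⟩ (by simpa [Fin.lt_def] using hlt) _)
      · have hja : j.val = a.val := by omega
        have e1 : (⟨j.val, by omega⟩ : Fin (n + 1)) = a := Fin.ext hja
        rw [e1, hab] at h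
        have := hπh.1 h
        have hv := congrArg Fin.val this
        simp at hv
        omega
    · rw [hσgt j hj, hσle j' hj'] at h
      rcases Nat.lt_or_ge j'.val a.val with hlt | hge
      · exact absurd h.symm (hmin ⟨j'.val, by omega⟩ (by simpa [Fin.lt_def] using hlt) _)
      · have hja : j'.val = a.val := by omega
        have e1 : (⟨j'.val, by omega⟩ : Fin (n + 1)) = a := Fin.ext hja
        rw [e1, hab] at h
        have := hπh.1 h.symm
        have hv := congrArg Fin.val this
        simp at hv
        omega
    · rw [hσgt j hj, hσgt j' hj'] at h
      have := hπh.1 h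
      have hv := congrArg Fin.val this
      simp at hv
      exact Fin.ext (by omega)
  · -- membership
    intro j
    rcases le_or_gt j.val a.val with hj | hj
    · rw [hσle j hj]; exact hπ.2.1 _
    · rw [hσgt j hj]; exact hπh.2.1 _
  · -- adjacency
    intro i
    have hic : i.castSucc.val = i.val := rfl
    have his : i.succ.val = i.val + 1 := rfl
    rcases le_or_gt (i.val + 1) a.val with hi | hi
    · rw [hσle i.castSucc (by omega), hσle i.succ (by omega)]
      have hkn : i.val < n := by omega
      have e1 : (⟨i.castSucc.val, by omega⟩ : Fin (n + 1)) = (⟨i.val, hkn⟩ : Fin n).castSucc :=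
        rfl
      have e2 : (⟨i.succ.val, by omega⟩ : Fin (n + 1)) = (⟨i.val, hkn⟩ : Fin n).succ := rfl
      rw [e1, e2]
      exact hπ.2.2 _
    · rw [hσge i.castSucc (by omega), hσge i.succ (by omega)]
      have hik : i.val < a.val + (m - b.val) := i.isLt
      have hkm : b.val + (i.val - a.val) < m := by omega
      have e1 : (⟨b.val + (i.castSucc.val - a.val), by have := i.castSucc.isLt; omega⟩ :
            Fin (m + 1)) = (⟨b.val + (i.val - a.val), hkm⟩ : Fin m).castSucc := rfl
      have e2 : (⟨b.val + (i.succ.val - a.val), by have := i.succ.isLt; omega⟩ :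
            Fin (m + 1)) = (⟨b.val + (i.val - a.val), hkm⟩ : Fin m).succ :=
        Fin.ext (by simp [Fin.succ]; omega)
      rw [e1, e2]
      exact hπh.2.2 _
  · -- backbend
    intro i c hc
    have hc2 : (β (recLevel σ i).toNat : ℕ∞) = (c : ℕ∞) := hc
    have hc' : c = β (recLevel σ i).toNat := by exact_mod_cast hc2.symm
    subst hc'
    have hL0 : (0 : ℤ) ≤ recLevel σ i := by
      have h0 : (0 : Fin (a.val + (m - b.val) + 1)) ∈ Finset.Iic i :=
        Finset.mem_Iic.mpr (Fin.zero_le i)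
      have := Finset.le_sup' (fun j => lastC (σ j)) h0
      rw [recLevel]
      have hσ00 : lastC (σ 0) = 0 := by rw [hσ0]; simp [lastC]
      rw [hσ00] at this
      exact this
    rcases le_or_gt i.val a.val with hi | hi
    · -- first piece: record level ≤ lastC (σ i)
      have hLle : recLevel σ i ≤ (i.val : ℤ) := by
        rw [recLevel]
        apply Finset.sup'_le
        intro j hj
        have hji' : j ≤ i := Finset.mem_Iic.mp hj
        have hji : j.val ≤ i.val := hji'
        rw [hσlast j (by omega)]
        exact_mod_cast hji
      have hli : lastC (σ i) = (i.val : ℤ) := hσlast i hi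
      have : (0 : ℤ) ≤ (β (recLevel σ i).toNat : ℤ) := Int.natCast_nonneg _
      omega
    · -- second piece
      set K : Fin (m + 1) := ⟨b.val + (i.val - a.val), by have := i.isLt; omega⟩ with hK
      have hσiK : σ i = πh K := hσgt i hi
      have hHb := hπhb K (β (recLevel πh K).toNat) rfl
      have hLH : recLevel σ i ≤ recLevel πh K := by
        rw [recLevel, recLevel]
        apply Finset.sup'_le
        intro j hj
        have hji' : j ≤ i := Finset.mem_Iic.mp hj
        have hji : j.val ≤ i.val := hji'
        rcases le_or_gt j.val a.val with hja | hja
        · have h1 : lastC (σ j) = (j.val : ℤ) := hσlast j hja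
          have h0K : (0 : Fin (m + 1)) ∈ Finset.Iic K := Finset.mem_Iic.mpr (Fin.zero_le K)
          have h2 := Finset.le_sup' (fun j => lastC (πh j)) h0K
          rw [hlast0] at h2
          rw [h1]
          have : (j.val : ℤ) ≤ (n : ℤ) := by exact_mod_cast (by omega : j.val ≤ n)
          exact le_trans this h2
        · rw [hσgt j hja]
          have hmem : (⟨b.val + (j.val - a.val), by have := j.isLt; omega⟩ : Fin (m + 1)) ∈
              Finset.Iic K := Finset.mem_Iic.mpr (by simp [hK, Fin.le_def]; omega)
          exact Finset.le_sup' (fun j => lastC (πh j)) hmem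
      have hH0 : (0 : ℤ) ≤ recLevel πh K := le_trans hL0 hLH
      have hβ' := hβ (recLevel πh K).toNat (recLevel σ i).toNat
        (by exact_mod_cast Int.toNat_le_toNat hLH)
      rw [Int.toNat_of_nonneg hH0, Int.toNat_of_nonneg hL0] at hβ'
      rw [hσiK]
      omega
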